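/- Fix s ≥ 3 and let (G_i)_{i≥0} be the K_{2,s}-bootstrap process on an n-vertex graph G with n ≥ s + 2, and let i ≥ 0. (i) If A, B ⊆ V(G) are disjoint sets such that any two vertices of A have at least s − 1 common neighbours in G_i, any two vertices of B have at least s − 1 common neighbours in G_i, and there is at least one edge of G_i between A and B, then in G_{i+2} every vertex of A is adjacent to every vertex of B. (ii) If C ⊆ V(G) is a set such that any two vertices of C have at least s − 1 common neighbours in G_i and G_i has at least one edge inside C, then C is a clique in G_{i+2}. -/

import Mathlib

open SimpleGraph

/-- The number of subgraphs of `G` isomorphic to `H`. -/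
noncomputable def numCopies {α β : Type*} (H : SimpleGraph α) (G : SimpleGraph β) : ℕ :=
  {G' : G.Subgraph | Nonempty (G'.coe ≃g H)}.ncard

/-- One step of the `H`-bootstrap process: add every missing edge whose addition
creates a new copy of `H`. -/
noncomputable def bootStep {α β : Type*} (H : SimpleGraph α) (G : SimpleGraph β) :
    SimpleGraph β :=
  G ⊔ SimpleGraph.fromRel (fun u v =>
    numCopies H G < numCopies H (G ⊔ SimpleGraph.fromEdgeSet {s(u, v)}))

/-- The `H`-bootstrap process `(G_i)_{i ≥ 0}` on the starting graph `G`. -/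
noncomputable def bootProcess {α β : Type*} (H : SimpleGraph α) (G : SimpleGraph β) :
    ℕ → SimpleGraph β
  | 0 => G
  | i + 1 => bootStep H (bootProcess H G i)

/-- The running time `τ_H(G)` of the `H`-bootstrap process on `G`. -/
noncomputable def runningTime {α β : Type*} (H : SimpleGraph α) (G : SimpleGraph β) : ℕ :=
  sInf {t | bootProcess H G t = bootProcess H G (t + 1)}

/-- `M_H(n)`, the maximum running time of the `H`-bootstrap process over all
`n`-vertex starting graphs. -/
noncomputable def maxRunningTime {α : Type*} (H : SimpleGraph α) (n : ℕ) : ℕ :=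
  sSup {t | ∃ G : SimpleGraph (Fin n), runningTime H G = t}

/-!
If `w` is adjacent to `v` and `u` has `s - 1` common neighbours `S` with `w`, then adding `uv`
creates the copy of `K_{2,s}` with parts `{u, w}` and `{v} ∪ S`, so `uv` appears one step later.
Starting from an edge `a₀b₀`, this joins every vertex of `B` to `a₀` after one step (through
`b₀`), and then every vertex of `A` to every vertex of `B` after the second (through `a₀`), since
common neighbourhoods only grow along the process. For `C`, the first step joins all of `C` to
`a₀`, and the second joins any two vertices of `C` through `a₀`.
-/

namespace SimpleGraph

variable {V : Type*}

lemma Subgraph.map_ofLE_injective {G G' : SimpleGraph V} (hle : G ≤ G') :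
    Function.Injective (Subgraph.map (Hom.ofLE hle)) := fun A B h =>
  Subgraph.ext (by simpa using congrArg Subgraph.verts h)
    (funext₂ fun x y => by simpa using congrFun₂ (congrArg Subgraph.Adj h) x y)

def Copy.completeBipartiteGraphOfAdj {α β : Type*} {G : SimpleGraph V} (f : α ↪ V) (g : β ↪ V)
    (hfg : ∀ a b, G.Adj (f a) (g b)) : Copy (_root_.completeBipartiteGraph α β) G where
  toHom := ⟨Sum.elim f g, by
    rintro (a | a) (b | b) h
    · simp at h
    · exact hfg a b
    · exact (hfg b a).symm
    · simp at h⟩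
  injective' := f.injective.sumElim g.injective fun a b => (hfg a b).ne

lemma le_bootStep {α : Type*} {H : SimpleGraph α} {G : SimpleGraph V} : G ≤ bootStep H G :=
  le_sup_left

variable [Finite V]

lemma ncard_commonNeighbors_mono {G G' : SimpleGraph V} (hle : G ≤ G') (u w : V) :
    (G.commonNeighbors u w).ncard ≤ (G'.commonNeighbors u w).ncard :=
  Set.ncard_le_ncard (Set.inter_subset_inter (fun _ h => hle h) (fun _ h => hle h))

lemma numCopies_lt_of_copy {α : Type*} {H : SimpleGraph α} {G G' : SimpleGraph V} (hle : G ≤ G')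
    (f : Copy H G') {a b : α} (hab : H.Adj a b) (hG : ¬ G.Adj (f a) (f b)) :
    numCopies H G < numCopies H G' := by
  have hssub : Subgraph.map (Hom.ofLE hle) '' {A : G.Subgraph | Nonempty (A.coe ≃g H)} ⊂
      {A : G'.Subgraph | Nonempty (A.coe ≃g H)} := by
    refine ⟨?_, fun h => ?_⟩
    · rintro _ ⟨A, ⟨e⟩, rfl⟩
      exact ⟨((Copy.ofLE G G' hle).isoSubgraphMap A).symm.trans e⟩
    · obtain ⟨A, -, hA⟩ := h ⟨f.isoToSubgraph.symm⟩
      have hAab : (A.map (Hom.ofLE hle)).Adj (f a) (f b) := hA ▸ ⟨a, b, hab, rfl, rfl⟩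
      exact hG (A.adj_sub (by simpa using hAab))
  calc numCopies H G = _ :=
        (Set.ncard_image_of_injective _ (Subgraph.map_ofLE_injective hle)).symm
    _ < numCopies H G' := Set.ncard_lt_ncard hssub

lemma adj_bootStep_of_copy {α : Type*} {H : SimpleGraph α} {G : SimpleGraph V} {u v : V}
    (huv : u ≠ v) (f : Copy H (G ⊔ fromEdgeSet {s(u, v)})) {a b : α} (hab : H.Adj a b)
    (hu : f a = u) (hv : f b = v) : (bootStep H G).Adj u v := by
  by_cases huvG : G.Adj u v
  · exact le_bootStep huvG
  · exact Or.inr ⟨huv, Or.inl (numCopies_lt_of_copy le_sup_left f hab (by rwa [hu, hv]))⟩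

variable {s : ℕ} {G : SimpleGraph V}

lemma adj_bootStep_of_adj_of_commonNeighbors (hs : 1 ≤ s) {u v w : V} (huv : u ≠ v)
    (hwv : G.Adj w v) (hcn : u ≠ w → s - 1 ≤ (G.commonNeighbors u w).ncard) :
    (bootStep (completeBipartiteGraph (Fin 2) (Fin s)) G).Adj u v := by
  by_cases huvG : G.Adj u v
  · exact le_bootStep huvG
  have huw : u ≠ w := fun h => huvG (h ▸ hwv)
  obtain ⟨S, hS, hScard⟩ := Set.exists_subset_card_eq (hcn huw)
  have hvS : v ∉ S := fun h => huvG (hS h).1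
  have hTcard : Nat.card (insert v S : Set V) = s := by
    rw [Nat.card_coe_set_eq, Set.ncard_insert_of_notMem hvS, hScard]
    omega
  let e := Finite.equivFinOfCardEq hTcard
  let f : Fin 2 ↪ V := ⟨![u, w], by simp [Function.Injective, Fin.forall_fin_two, huw, huw.symm]⟩
  let g : Fin s ↪ V := e.symm.toEmbedding.trans (Function.Embedding.subtype _)
  have hfg : ∀ a b, (G ⊔ fromEdgeSet {s(u, v)}).Adj (f a) (g b) := by
    have hleft : ∀ a, f a = u ∨ f a = w := Fin.forall_fin_two.mpr ⟨.inl rfl, .inr rfl⟩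
    intro a b
    rcases Set.mem_insert_iff.mp (e.symm b).2 with hb | hb <;> rcases hleft a with ha | ha <;>
      simp only [g, ha, hb, Function.Embedding.trans_apply, Equiv.toEmbedding_apply,
        Function.Embedding.subtype_apply]
    · exact Or.inr ⟨rfl, huv⟩
    · exact Or.inl hwv
    · exact Or.inl (hS hb).1
    · exact Or.inl (hS hb).2
  exact adj_bootStep_of_copy huv (Copy.completeBipartiteGraphOfAdj f g hfg)
    (a := .inl 0) (b := .inr (e ⟨v, Set.mem_insert v S⟩)) (by simp) rfl
    (show g _ = v by simp [g])

lemma adj_bootStep_bootStep_of_pairwise {A B : Set V} (hs : 1 ≤ s) (hAB : Disjoint A B)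
    (hA : A.Pairwise fun x y => s - 1 ≤ (G.commonNeighbors x y).ncard)
    (hB : B.Pairwise fun x y => s - 1 ≤ (G.commonNeighbors x y).ncard)
    {a₀ b₀ : V} (ha₀ : a₀ ∈ A) (hb₀ : b₀ ∈ B) (hab₀ : G.Adj a₀ b₀) {a b : V} (ha : a ∈ A)
    (hb : b ∈ B) :
    (bootStep (completeBipartiteGraph (Fin 2) (Fin s))
      (bootStep (completeBipartiteGraph (Fin 2) (Fin s)) G)).Adj a b := by
  have ha₀b : (bootStep (completeBipartiteGraph (Fin 2) (Fin s)) G).Adj a₀ b :=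
    (adj_bootStep_of_adj_of_commonNeighbors hs (hAB.ne_of_mem ha₀ hb).symm hab₀.symm
      (hB hb hb₀)).symm
  exact adj_bootStep_of_adj_of_commonNeighbors hs (hAB.ne_of_mem ha hb) ha₀b
    fun h => (hA ha ha₀ h).trans (ncard_commonNeighbors_mono le_bootStep a a₀)

lemma isClique_bootStep_bootStep_of_pairwise {C : Set V} (hs : 1 ≤ s)
    (hC : C.Pairwise fun x y => s - 1 ≤ (G.commonNeighbors x y).ncard)
    {a₀ b₀ : V} (ha₀ : a₀ ∈ C) (hb₀ : b₀ ∈ C) (hab₀ : G.Adj a₀ b₀) :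
    (bootStep (completeBipartiteGraph (Fin 2) (Fin s))
      (bootStep (completeBipartiteGraph (Fin 2) (Fin s)) G)).IsClique C := by
  have hadj_a₀ : ∀ c ∈ C, c ≠ a₀ →
      (bootStep (completeBipartiteGraph (Fin 2) (Fin s)) G).Adj c a₀ :=
    fun c hc hca => adj_bootStep_of_adj_of_commonNeighbors hs hca hab₀.symm (hC hc hb₀)
  intro x hx y hy hxy
  by_cases hya : y = a₀
  · exact le_bootStep (hya ▸ hadj_a₀ x hx (hya ▸ hxy))
  · exact adj_bootStep_of_adj_of_commonNeighbors hs hxy (hadj_a₀ y hy hya).symm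
      fun h => (hC hx ha₀ h).trans (ncard_commonNeighbors_mono le_bootStep x a₀)

end SimpleGraph

theorem blocks_merge_general {V : Type} [Fintype V] (s : ℕ) (hs : 3 ≤ s)
    (G : SimpleGraph V) (i : ℕ) :
    (∀ A B : Set V, Disjoint A B →
      (∀ x ∈ A, ∀ y ∈ A, x ≠ y → s - 1 ≤
        ((bootProcess (completeBipartiteGraph (Fin 2) (Fin s)) G i).neighborSet x ∩
          (bootProcess (completeBipartiteGraph (Fin 2) (Fin s)) G i).neighborSet y).ncard) →
      (∀ x ∈ B, ∀ y ∈ B, x ≠ y → s - 1 ≤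
        ((bootProcess (completeBipartiteGraph (Fin 2) (Fin s)) G i).neighborSet x ∩
          (bootProcess (completeBipartiteGraph (Fin 2) (Fin s)) G i).neighborSet y).ncard) →
      (∃ a ∈ A, ∃ b ∈ B,
        (bootProcess (completeBipartiteGraph (Fin 2) (Fin s)) G i).Adj a b) →
      ∀ a ∈ A, ∀ b ∈ B,
        (bootProcess (completeBipartiteGraph (Fin 2) (Fin s)) G (i + 2)).Adj a b) ∧
    (∀ C : Set V,
      (∀ x ∈ C, ∀ y ∈ C, x ≠ y → s - 1 ≤
        ((bootProcess (completeBipartiteGraph (Fin 2) (Fin s)) G i).neighborSet x ∩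
          (bootProcess (completeBipartiteGraph (Fin 2) (Fin s)) G i).neighborSet y).ncard) →
      (∃ a ∈ C, ∃ b ∈ C,
        (bootProcess (completeBipartiteGraph (Fin 2) (Fin s)) G i).Adj a b) →
      (bootProcess (completeBipartiteGraph (Fin 2) (Fin s)) G (i + 2)).IsClique C) := by
  have hs₁ : 1 ≤ s := by omega
  refine ⟨fun A B hAB hA hB ⟨a₀, ha₀, b₀, hb₀, hab₀⟩ a ha b hb => ?_,
    fun C hC ⟨a₀, ha₀, b₀, hb₀, hab₀⟩ => ?_⟩
  · exact adj_bootStep_bootStep_of_pairwise hs₁ hAB hA hB ha₀ hb₀ hab₀ ha hb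
  · exact isClique_bootStep_bootStep_of_pairwise hs₁ hC ha₀ hb₀ hab₀

/-- In the `K_{2,s}`-bootstrap process (`s ≥ 3`) on an `n`-vertex graph
with `n ≥ s + 2`: (i) if `A` and `B` are disjoint sets such that any two distinct
vertices of the same set have at least `s − 1` common neighbours at time `i`, and there
is an edge between `A` and `B` at time `i`, then at time `i + 2` all edges between `A`
and `B` are present; (ii) if any two distinct vertices of a set `C` have at least
`s − 1` common neighbours at time `i` and `G_i` has an edge inside `C`, then `C` is a
clique at time `i + 2`. -/
theorem blocks_merge {V : Type} [Fintype V] (s : ℕ) (hs : 3 ≤ s)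
    (G : SimpleGraph V) (hn : s + 2 ≤ Fintype.card V) (i : ℕ) :
    (∀ A B : Set V, Disjoint A B →
      (∀ x ∈ A, ∀ y ∈ A, x ≠ y → s - 1 ≤
        ((bootProcess (completeBipartiteGraph (Fin 2) (Fin s)) G i).neighborSet x ∩
          (bootProcess (completeBipartiteGraph (Fin 2) (Fin s)) G i).neighborSet y).ncard) →
      (∀ x ∈ B, ∀ y ∈ B, x ≠ y → s - 1 ≤
        ((bootProcess (completeBipartiteGraph (Fin 2) (Fin s)) G i).neighborSet x ∩
          (bootProcess (completeBipartiteGraph (Fin 2) (Fin s)) G i).neighborSet y).ncard) →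
      (∃ a ∈ A, ∃ b ∈ B,
        (bootProcess (completeBipartiteGraph (Fin 2) (Fin s)) G i).Adj a b) →
      ∀ a ∈ A, ∀ b ∈ B,
        (bootProcess (completeBipartiteGraph (Fin 2) (Fin s)) G (i + 2)).Adj a b) ∧
    (∀ C : Set V,
      (∀ x ∈ C, ∀ y ∈ C, x ≠ y → s - 1 ≤
        ((bootProcess (completeBipartiteGraph (Fin 2) (Fin s)) G i).neighborSet x ∩
          (bootProcess (completeBipartiteGraph (Fin 2) (Fin s)) G i).neighborSet y).ncard) →
      (∃ a ∈ C, ∃ b ∈ C,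
        (bootProcess (completeBipartiteGraph (Fin 2) (Fin s)) G i).Adj a b) →
      (bootProcess (completeBipartiteGraph (Fin 2) (Fin s)) G (i + 2)).IsClique C) :=
  blocks_merge_general s hs G i
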